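/- For any p ∈ [1, ∞), any radius ε ≥ 0, any nominal probability distribution P̂_N supported on a closed set Ξ ⊆ ℝ^m, and any loss function ℓ : ℝ^m → ℝ ∪ {∞} that is upper semicontinuous and P̂_N-integrable, the worst-case risk is bounded above by the Lipschitz-regularized nominal risk: sup_{Q ∈ 𝔹_{ε,p}(P̂_N)} E^Q[ℓ(ξ)] ≤ E^{P̂_N}[ℓ(ξ)] + ε · Lip(ℓ), where Lip(ℓ) = sup_{ξ ≠ ξ'} |ℓ(ξ) − ℓ(ξ')| / ‖ξ − ξ'‖. -/

import Mathlib

open MeasureTheory Filter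
open scoped ENNReal NNReal BigOperators Classical Matrix

noncomputable section

namespace WDro

variable {m : ℕ}

/-- Axioms for an abstract norm `nrm` on `ℝ^m`. -/
structure IsNorm (nrm : (Fin m → ℝ) → ℝ) : Prop where
  eq_zero_iff : ∀ x, nrm x = 0 ↔ x = 0
  triangle : ∀ x y, nrm (x + y) ≤ nrm x + nrm y
  homog : ∀ (c : ℝ) (x : Fin m → ℝ), nrm (c • x) = |c| * nrm x

/-- The Euclidean norm on `ℝ^m`. -/
def eucNorm (x : Fin m → ℝ) : ℝ := Real.sqrt (x ⬝ᵥ x)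

/-- The dual norm `‖z‖_* = sup_{‖ξ‖ ≤ 1} z^⊤ ξ`. -/
def dualNorm (nrm : (Fin m → ℝ) → ℝ) (z : Fin m → ℝ) : ℝ :=
  sSup {r : ℝ | ∃ ξ : Fin m → ℝ, nrm ξ ≤ 1 ∧ r = z ⬝ᵥ ξ}

/-- The set of couplings of `Q` and `Q'`: joint distributions with the given marginals. -/
def Couplings {α : Type*} [MeasurableSpace α] (Q Q' : Measure α) : Set (Measure (α × α)) :=
  {π | IsProbabilityMeasure π ∧ π.map Prod.fst = Q ∧ π.map Prod.snd = Q'}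

/-- The type-`p` Wasserstein distance with transportation cost `nrm (ξ - ξ') ^ p`. -/
def Wp (nrm : (Fin m → ℝ) → ℝ) (p : ℝ) (Q Q' : Measure (Fin m → ℝ)) : ℝ≥0∞ :=
  (⨅ π ∈ Couplings Q Q', ∫⁻ ξ, ENNReal.ofReal (nrm (ξ.1 - ξ.2) ^ p) ∂π) ^ (1 / p)

/-- The type-`p` Wasserstein ball of radius `ε` around `P`, within distributions on `Ξ`. -/
def WBall (nrm : (Fin m → ℝ) → ℝ) (p ε : ℝ) (Ξ : Set (Fin m → ℝ))
    (P : Measure (Fin m → ℝ)) : Set (Measure (Fin m → ℝ)) :=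
  {Q | IsProbabilityMeasure Q ∧ Q Ξᶜ = 0 ∧ Wp nrm p Q P ≤ ENNReal.ofReal ε}

/-- Positive part of an extended real number, as an extended nonnegative real. -/
def epos (x : EReal) : ℝ≥0∞ := if x = ⊤ then ⊤ else ENNReal.ofReal x.toReal

/-- Canonical map from `ℝ≥0∞` to `EReal`. -/
def ennToE (x : ℝ≥0∞) : EReal := if x = ⊤ then ⊤ else ((x.toReal : ℝ) : EReal)

/-- Expectation of an extended-real-valued loss under `Q`, with the convention that the
expectation is `+∞` whenever the positive part has infinite integral. -/
def eexp {α : Type*} [MeasurableSpace α] (Q : Measure α) (ℓ : α → EReal) : EReal :=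
  if (∫⁻ x, epos (ℓ x) ∂Q) = ⊤ then ⊤
  else if (∫⁻ x, epos (-(ℓ x)) ∂Q) = ⊤ then ⊥
  else (((∫⁻ x, epos (ℓ x) ∂Q).toReal - (∫⁻ x, epos (-(ℓ x)) ∂Q).toReal : ℝ) : EReal)

/-- Integrability of an extended-real-valued loss under `Q`. -/
def IntegrableE {α : Type*} [MeasurableSpace α] (Q : Measure α) (ℓ : α → EReal) : Prop :=
  Measurable ℓ ∧ (∫⁻ x, epos (ℓ x) ∂Q) ≠ ⊤ ∧ (∫⁻ x, epos (-(ℓ x)) ∂Q) ≠ ⊤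

/-- Lipschitz modulus of an extended-real-valued function with respect to `nrm`. -/
def lipModE (nrm : (Fin m → ℝ) → ℝ) (ℓ : (Fin m → ℝ) → EReal) : ℝ≥0∞ :=
  ⨆ (x : Fin m → ℝ) (y : Fin m → ℝ) (_ : x ≠ y),
    epos (ℓ x - ℓ y) / ENNReal.ofReal (nrm (x - y))

/-- Lipschitz modulus of a real-valued function with respect to `nrm`. -/
def lipMod (nrm : (Fin m → ℝ) → ℝ) (φ : (Fin m → ℝ) → ℝ) : ℝ≥0∞ :=
  ⨆ (x : Fin m → ℝ) (y : Fin m → ℝ) (_ : x ≠ y),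
    ENNReal.ofReal (|φ x - φ y| / nrm (x - y))

/-- The empirical distribution on `N` samples. -/
def empirical (N : ℕ) (xs : Fin N → (Fin m → ℝ)) : Measure (Fin m → ℝ) :=
  (N : ℝ≥0∞)⁻¹ • ∑ i, Measure.dirac (xs i)

/-- The mean vector of a distribution on `ℝ^m`. -/
def meanVec (Q : Measure (Fin m → ℝ)) : Fin m → ℝ := fun i => ∫ x, x i ∂Q

/-- The covariance matrix of a distribution on `ℝ^m`. -/
def covMatrix (Q : Measure (Fin m → ℝ)) : Matrix (Fin m) (Fin m) ℝ :=
  Matrix.of fun i j => ∫ x, (x i - meanVec Q i) * (x j - meanVec Q j) ∂Q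

/-- The positive semidefinite square root of a matrix (junk value `0` off the PSD cone). -/
def psdSqrt (A : Matrix (Fin m) (Fin m) ℝ) : Matrix (Fin m) (Fin m) ℝ :=
  if h : A.PosSemidef then
    (h.1.eigenvectorUnitary : Matrix (Fin m) (Fin m) ℝ) *
      Matrix.diagonal (Real.sqrt ∘ h.1.eigenvalues) *
      (star h.1.eigenvectorUnitary : Matrix (Fin m) (Fin m) ℝ)
  else 0

/-- The mean-covariance uncertainty set `𝒰_ε(μ̂, Σ̂)`. -/
def Uset (ε : ℝ) (muh : Fin m → ℝ) (Sh : Matrix (Fin m) (Fin m) ℝ) :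
    Set ((Fin m → ℝ) × Matrix (Fin m) (Fin m) ℝ) :=
  {p | p.2.PosSemidef ∧
    eucNorm (muh - p.1) ^ 2 +
      (Sh + p.2 - (2 : ℝ) • psdSqrt (psdSqrt Sh * p.2 * psdSqrt Sh)).trace ≤ ε ^ 2}

/-- The first- and second-order moment uncertainty set `𝒱_ε(μ̂, Σ̂)`. -/
def Vset (ε : ℝ) (muh : Fin m → ℝ) (Sh : Matrix (Fin m) (Fin m) ℝ) :
    Set ((Fin m → ℝ) × Matrix (Fin m) (Fin m) ℝ) :=
  {p | p.2.PosSemidef ∧ (p.1, p.2 - Matrix.vecMulVec p.1 p.1) ∈ Uset ε muh Sh}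

/-- The Gelbrich hull `𝔾_ε(μ̂, Σ̂)` of distributions on `Ξ`. -/
def GHull (ε : ℝ) (muh : Fin m → ℝ) (Sh : Matrix (Fin m) (Fin m) ℝ)
    (Ξ : Set (Fin m → ℝ)) : Set (Measure (Fin m → ℝ)) :=
  {Q | IsProbabilityMeasure Q ∧ Q Ξᶜ = 0 ∧ Integrable (fun x => x ⬝ᵥ x) Q ∧
    (meanVec Q, covMatrix Q) ∈ Uset ε muh Sh}

/-- `Q` is the elliptical distribution `ℰ_g(μ, Σ)`. -/
def IsElliptical (g : ℝ → ℝ) (mu : Fin m → ℝ) (Sh : Matrix (Fin m) (Fin m) ℝ)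
    (Q : Measure (Fin m → ℝ)) : Prop :=
  IsProbabilityMeasure Q ∧ (∀ u : ℝ, 0 ≤ u → 0 ≤ g u) ∧
    Integrable (fun x => x ⬝ᵥ x) Q ∧ meanVec Q = mu ∧ covMatrix Q = Sh ∧
    ∃ C : ℝ, 0 < C ∧
      Q = volume.withDensity
        (fun ξ => ENNReal.ofReal (C * (Sh.det)⁻¹ * g ((ξ - mu) ⬝ᵥ (Sh⁻¹).mulVec (ξ - mu))))

/-- The symmetric block matrix `[[A, b], [bᵀ, c]]`. -/
def blockM (A : Matrix (Fin m) (Fin m) ℝ) (b : Fin m → ℝ) (c : ℝ) :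
    Matrix (Fin m ⊕ Unit) (Fin m ⊕ Unit) ℝ :=
  Matrix.fromBlocks A (Matrix.of fun i (_ : Unit) => b i)
    (Matrix.of fun (_ : Unit) j => b j) (Matrix.of fun (_ : Unit) (_ : Unit) => c)

/-- The largest eigenvalue of a (symmetric) matrix. -/
def lambdaMax (Q : Matrix (Fin m) (Fin m) ℝ) : ℝ :=
  sSup {r : ℝ | ∃ v : Fin m → ℝ, v ≠ 0 ∧ Q.mulVec v = r • v}

/-- Convexity of an extended-real-valued function. -/
def ConvexE (f : (Fin m → ℝ) → EReal) : Prop :=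
  ∀ x y : Fin m → ℝ, ∀ t : ℝ, 0 ≤ t → t ≤ 1 →
    f (t • x + (1 - t) • y) ≤ (t : EReal) * f x + ((1 - t : ℝ) : EReal) * f y

/-- The convex conjugate of an extended-real-valued function. -/
def conjE (f : (Fin m → ℝ) → EReal) (z : Fin m → ℝ) : EReal :=
  ⨆ ξ : Fin m → ℝ, (((z ⬝ᵥ ξ) : ℝ) : EReal) - f ξ

/-- The support function of a set `Ξ ⊆ ℝ^m`. -/
def suppFnE (Ξ : Set (Fin m → ℝ)) (z : Fin m → ℝ) : EReal :=
  ⨆ ξ : Ξ, (((z ⬝ᵥ (ξ : Fin m → ℝ)) : ℝ) : EReal)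

/-- The constant `φ(q) = (q-1)^(q-1)/q^q` for `q > 1` and `φ(1) = 1`. -/
def phiq (q : ℝ) : ℝ := if q = 1 then 1 else (q - 1) ^ (q - 1) / q ^ q

/-- The term `φ(q) γ ‖u/γ‖_*^q`, with the limiting convention at `γ = 0`. -/
def perspDual (nrm : (Fin m → ℝ) → ℝ) (q γ : ℝ) (u : Fin m → ℝ) : EReal :=
  if γ = 0 then (if q = 1 then ((dualNorm nrm u : ℝ) : EReal) else if u = 0 then 0 else ⊤)
  else ((phiq q * (γ * dualNorm nrm (γ⁻¹ • u) ^ q) : ℝ) : EReal)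

/-- The perspective `α ‖θ/α‖^p` of the `p`-th power of the norm, with the limiting
convention `0 ‖θ/0‖^p = lim_{α ↓ 0} α ‖θ/α‖^p`. -/
def perspNorm (nrm : (Fin m → ℝ) → ℝ) (p : ℝ) (θ : Fin m → ℝ) (α : ℝ) : EReal :=
  if α = 0 then (if p = 1 then ((nrm θ : ℝ) : EReal) else if θ = 0 then 0 else ⊤)
  else ((α * nrm (α⁻¹ • θ) ^ p : ℝ) : EReal)

/-- The perspective `α f(x + θ/α)` of a loss, defined at `α = 0` as the value making it
upper semicontinuous there (the limit superior from `α > 0`). -/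
def perspLoss (f : (Fin m → ℝ) → EReal) (x θ : Fin m → ℝ) (α : ℝ) : EReal :=
  if α = 0 then
    Filter.limsup
      (fun pr : (Fin m → ℝ) × ℝ => (pr.2 : EReal) * f (x + pr.2⁻¹ • pr.1))
      ((nhds θ) ×ˢ (nhdsWithin 0 (Set.Ioi (0 : ℝ))))
  else (α : EReal) * f (x + α⁻¹ • θ)

/-- The recession cone of a set `Ξ ⊆ ℝ^m`. -/
def recessionCone (Ξ : Set (Fin m → ℝ)) : Set (Fin m → ℝ) :=
  {θ | ∀ ξ ∈ Ξ, ∀ t : ℝ, 0 ≤ t → ξ + t • θ ∈ Ξ}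

/-- The constraint `x + θ/α ∈ Ξ`, interpreted at `α = 0` as membership of `θ` in the
recession cone of `Ξ`. -/
def perspMem (Ξ : Set (Fin m → ℝ)) (x θ : Fin m → ℝ) (α : ℝ) : Prop :=
  if α = 0 then θ ∈ recessionCone Ξ else x + α⁻¹ • θ ∈ Ξ

/-- The standard Gaussian distribution on `ℝ^m`. -/
def stdGaussianPi (m : ℕ) : Measure (Fin m → ℝ) :=
  Measure.pi fun _ => ProbabilityTheory.gaussianReal 0 1

/-- The (possibly degenerate) normal distribution `𝒩(μ̂, Σ̂)` on `ℝ^m`. -/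
def mvNormal (muh : Fin m → ℝ) (Sh : Matrix (Fin m) (Fin m) ℝ) : Measure (Fin m → ℝ) :=
  (stdGaussianPi m).map (fun z => muh + (psdSqrt Sh).mulVec z)

/-- `- log det X`, valued `+∞` when `det X ≤ 0`. -/
def negLogDet (X : Matrix (Fin m) (Fin m) ℝ) : EReal :=
  if X.det ≤ 0 then ⊤ else ((-Real.log X.det : ℝ) : EReal)

/-- The hinge loss. -/
def hingeLoss (z : ℝ) : ℝ := max 0 (1 - z)

/-- The smooth hinge loss. -/
def smoothHingeLoss (z : ℝ) : ℝ :=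
  if z ≤ 0 then 1 / 2 - z else if z < 1 then (1 - z) ^ 2 / 2 else 0

/-- The logloss. -/
def logLoss (z : ℝ) : ℝ := Real.log (1 + Real.exp (-z))

/-- The input-output transportation cost with `κ = ∞`: moving mass between points with
different outputs is infinitely expensive. -/
def classDist (n : ℕ) (nrm : (Fin n → ℝ) → ℝ) (a b : (Fin n → ℝ) × ℝ) : ℝ≥0∞ :=
  if a.2 = b.2 then ENNReal.ofReal (nrm (a.1 - b.1)) else ⊤

/-- The type-1 Wasserstein distance on the input-output space for the cost `classDist`. -/
def W1class (n : ℕ) (nrm : (Fin n → ℝ) → ℝ) (Q Q' : Measure ((Fin n → ℝ) × ℝ)) : ℝ≥0∞ :=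
  ⨅ π ∈ Couplings Q Q', ∫⁻ pr, classDist n nrm pr.1 pr.2 ∂π

/-- The type-1 Wasserstein ball on the input-output space `ℝ^n × {-1, +1}`. -/
def classBall (n : ℕ) (nrm : (Fin n → ℝ) → ℝ) (ε : ℝ) (P : Measure ((Fin n → ℝ) × ℝ)) :
    Set (Measure ((Fin n → ℝ) × ℝ)) :=
  {Q | IsProbabilityMeasure Q ∧
    Q ({ξ : (Fin n → ℝ) × ℝ | ξ.2 = 1 ∨ ξ.2 = -1})ᶜ = 0 ∧
    W1class n nrm Q P ≤ ENNReal.ofReal ε}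

/-- The empirical distribution on `N` labeled samples. -/
def empiricalClass (n N : ℕ) (xs : Fin N → (Fin n → ℝ)) (ys : Fin N → ℝ) :
    Measure ((Fin n → ℝ) × ℝ) :=
  (N : ℝ≥0∞)⁻¹ • ∑ i, Measure.dirac (xs i, ys i)

/-- The distributionally robust maximum likelihood objective. -/
def mleObj (ε : ℝ) (muh : Fin m → ℝ) (Sh : Matrix (Fin m) (Fin m) ℝ)
    (mu : Fin m → ℝ) (X : Matrix (Fin m) (Fin m) ℝ) : EReal :=
  negLogDet X +
    ⨆ Q : (WBall eucNorm 2 ε Set.univ (mvNormal muh Sh)),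
      eexp Q.1 (fun ξ => (((ξ - mu) ⬝ᵥ X.mulVec (ξ - mu) : ℝ) : EReal))

end WDro

/-!
If `π` couples `Q` with `P`, then `ℓ ξ ≤ ℓ ξ' + Lip(ℓ) ‖ξ - ξ'‖` integrates to
`E^Q[ℓ] ≤ E^P[ℓ] + Lip(ℓ) E^π ‖ξ - ξ'‖`, and by Jensen `E^π ‖ξ - ξ'‖ ≤ (E^π ‖ξ - ξ'‖^p)^(1/p)`,
which can be taken arbitrarily close to `W_p(Q, P) ≤ ε`. When `Lip(ℓ) = ∞` the bound is trivial
unless `ε = 0`; then `W_p(Q, P) = 0` forces `Q = P`, because testing a closed set against its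
Lipschitz thickened indicators shows that `Q` and `P` agree on closed sets.
-/

open Topology

namespace WDro

section Norm

variable {m : ℕ} {nrm : (Fin m → ℝ) → ℝ}

def IsNorm.toSeminorm (h : IsNorm nrm) : Seminorm ℝ (Fin m → ℝ) :=
  Seminorm.of nrm h.triangle fun c x => by rw [h.homog, Real.norm_eq_abs]

lemma IsNorm.nonneg (h : IsNorm nrm) (x : Fin m → ℝ) : 0 ≤ nrm x :=
  apply_nonneg h.toSeminorm x

lemma IsNorm.pos (h : IsNorm nrm) {x : Fin m → ℝ} (hx : x ≠ 0) : 0 < nrm x :=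
  (h.nonneg x).lt_of_ne' fun h0 => hx ((h.eq_zero_iff x).1 h0)

lemma IsNorm.continuous (h : IsNorm nrm) : Continuous nrm :=
  continuousOn_univ.1 (h.toSeminorm.convexOn.continuousOn isOpen_univ)

lemma IsNorm.exists_norm_le_mul (h : IsNorm nrm) : ∃ C : ℝ≥0, ∀ x, ‖x‖ ≤ C * nrm x := by
  -- `1 / nrm` is continuous on the compact unit sphere of the sup norm, hence bounded there
  obtain ⟨C, hC⟩ := (isCompact_sphere (0 : Fin m → ℝ) 1).exists_bound_of_continuousOn
    (f := fun u => (nrm u)⁻¹) <| h.continuous.continuousOn.inv₀ fun u hu =>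
      (h.pos (ne_zero_of_mem_unit_sphere ⟨u, hu⟩)).ne'
  refine ⟨C.toNNReal, fun x => ?_⟩
  rcases eq_or_ne x 0 with rfl | hx
  · simp [(h.eq_zero_iff 0).2 rfl]
  have hxpos : 0 < ‖x‖ := norm_pos_iff.2 hx
  have hu := hC (‖x‖⁻¹ • x) (by simp [norm_smul, hxpos.ne'])
  have hnx := h.pos hx
  rw [h.homog, abs_of_pos (inv_pos.2 hxpos), norm_inv, Real.norm_eq_abs,
    abs_of_pos (mul_pos (inv_pos.2 hxpos) hnx), mul_inv, inv_inv] at hu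
  calc ‖x‖ = ‖x‖ * (nrm x)⁻¹ * nrm x := by field_simp
    _ ≤ C.toNNReal * nrm x := by gcongr; exact hu.trans (Real.le_coe_toNNReal C)

lemma IsNorm.exists_edist_le_mul (h : IsNorm nrm) :
    ∃ C : ℝ≥0, ∀ x y : Fin m → ℝ, edist x y ≤ C * ENNReal.ofReal (nrm (x - y)) := by
  obtain ⟨C, hC⟩ := h.exists_norm_le_mul
  refine ⟨C, fun x y => ?_⟩
  rw [edist_dist, dist_eq_norm, ← ENNReal.ofReal_coe_nnreal, ← ENNReal.ofReal_mul C.coe_nonneg]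
  exact ENNReal.ofReal_le_ofReal (hC _)

end Norm

section Couplings

variable {α : Type*} [MeasurableSpace α] {μ ν : Measure α} {π : Measure (α × α)}

def transportCost (c : α → α → ℝ≥0∞) (μ ν : Measure α) : ℝ≥0∞ :=
  ⨅ π ∈ Couplings μ ν, ∫⁻ z, c z.1 z.2 ∂π

lemma Couplings.map_swap (hπ : π ∈ Couplings μ ν) : π.map Prod.swap ∈ Couplings ν μ := by
  obtain ⟨hprob, h₁, h₂⟩ := hπ
  refine ⟨Measure.isProbabilityMeasure_map measurable_swap.aemeasurable, ?_, ?_⟩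
  · rwa [Measure.map_map measurable_fst measurable_swap]
  · rwa [Measure.map_map measurable_snd measurable_swap]

lemma transportCost_comm {c : α → α → ℝ≥0∞} (hc : ∀ x y, c x y = c y x) :
    transportCost c μ ν = transportCost c ν μ := by
  have swap_le : ∀ μ ν : Measure α, transportCost c ν μ ≤ transportCost c μ ν :=
    fun μ ν => le_iInf₂ fun π hπ => by
      refine (iInf₂_le _ (Couplings.map_swap hπ)).trans_eq ?_
      rw [show Prod.swap = (MeasurableEquiv.prodComm : α × α ≃ᵐ α × α) from rfl,
        lintegral_map_equiv]
      exact lintegral_congr fun z => hc z.2 z.1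
  exact le_antisymm (swap_le ν μ) (swap_le μ ν)

lemma exists_lintegral_lt_of_transportCost_lt {c : α → α → ℝ≥0∞} {r : ℝ≥0∞}
    (h : transportCost c μ ν < r) : ∃ π ∈ Couplings μ ν, ∫⁻ z, c z.1 z.2 ∂π < r := by
  simpa [transportCost, iInf_lt_iff] using h

lemma lintegral_add_lintegral_of_mem_couplings (hπ : π ∈ Couplings μ ν) {f g : α → ℝ≥0∞}
    (hf : Measurable f) (hg : Measurable g) :
    ∫⁻ x, f x ∂μ + ∫⁻ y, g y ∂ν = ∫⁻ z, (f z.1 + g z.2) ∂π := by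
  obtain ⟨-, rfl, rfl⟩ := hπ
  rw [lintegral_map hf measurable_fst, lintegral_map hg measurable_snd]
  exact (lintegral_add_left (hf.comp measurable_fst) _).symm

lemma lintegral_add_le_of_mem_couplings (hπ : π ∈ Couplings μ ν) {f₁ g₁ f₂ g₂ : α → ℝ≥0∞}
    (hf₁ : Measurable f₁) (hg₁ : Measurable g₁) (hf₂ : Measurable f₂) (hg₂ : Measurable g₂)
    {c : α × α → ℝ≥0∞} (h : ∀ z, f₁ z.1 + g₁ z.2 ≤ f₂ z.1 + g₂ z.2 + c z) :
    ∫⁻ x, f₁ x ∂μ + ∫⁻ y, g₁ y ∂ν ≤ ∫⁻ x, f₂ x ∂μ + ∫⁻ y, g₂ y ∂ν + ∫⁻ z, c z ∂π := by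
  rw [lintegral_add_lintegral_of_mem_couplings hπ hf₁ hg₁,
    lintegral_add_lintegral_of_mem_couplings hπ hf₂ hg₂]
  exact (lintegral_mono h).trans_eq
    (lintegral_add_left ((hf₂.comp measurable_fst).add (hg₂.comp measurable_snd)) _)

lemma lintegral_le_of_mem_couplings (hπ : π ∈ Couplings μ ν) {f g : α → ℝ≥0∞}
    (hf : Measurable f) (hg : Measurable g) {c : α × α → ℝ≥0∞} (h : ∀ z, f z.1 ≤ g z.2 + c z) :
    ∫⁻ x, f x ∂μ ≤ ∫⁻ y, g y ∂ν + ∫⁻ z, c z ∂π := by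
  simpa using lintegral_add_le_of_mem_couplings hπ hf measurable_const measurable_const hg
    (g₁ := 0) (f₂ := 0) (by simpa using h)

lemma le_add_mul_of_transportCost_le {c : α → α → ℝ≥0∞} {a b L r : ℝ≥0∞} (hL : L ≠ ⊤)
    (hr : r ≠ ⊤) (hT : transportCost c μ ν ≤ r)
    (h : ∀ π ∈ Couplings μ ν, a ≤ b + L * ∫⁻ z, c z.1 z.2 ∂π) : a ≤ b + L * r := by
  have : (𝓝[>] r).NeBot := nhdsGT_neBot_of_exists_gt ⟨⊤, hr.lt_top⟩
  have hlim : Tendsto (fun s => b + L * s) (𝓝[>] r) (𝓝 (b + L * r)) :=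
    ((continuous_const.add (ENNReal.continuous_const_mul hL)).tendsto r).mono_left
      nhdsWithin_le_nhds
  refine ge_of_tendsto hlim (eventually_nhdsWithin_of_forall fun s hs => ?_)
  obtain ⟨π, hπ, hlt⟩ := exists_lintegral_lt_of_transportCost_lt (hT.trans_lt hs)
  exact (h π hπ).trans (by gcongr)

end Couplings

section Metric

variable {α : Type*} [PseudoEMetricSpace α]

lemma coe_le_add_mul_edist_of_lipschitzWith {f : α → ℝ≥0} {K : ℝ≥0} (hf : LipschitzWith K f)
    (x y : α) : (f x : ℝ≥0∞) ≤ f y + K * edist x y :=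
  calc (f x : ℝ≥0∞) ≤ f y + edist (f x) (f y) := by
        rw [edist_nndist]; exact_mod_cast NNReal.le_add_nndist _ _
    _ ≤ f y + K * edist x y := by gcongr; exact hf x y

variable [MeasurableSpace α] [OpensMeasurableSpace α] {μ ν : Measure α}

lemma measure_le_of_transportCost_edist_eq_zero [IsFiniteMeasure ν]
    (h : transportCost edist μ ν = 0) {F : Set α} (hF : IsClosed F) : μ F ≤ ν F := by
  have le_thickened : ∀ {δ : ℝ} (hδ : 0 < δ), μ F ≤ ∫⁻ x, thickenedIndicator hδ F x ∂ν := by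
    intro δ hδ
    have hf := (thickenedIndicator hδ F).continuous.measurable.coe_nnreal_ennreal
    have hK : ((δ.toNNReal⁻¹ : ℝ≥0) : ℝ≥0∞) ≠ ⊤ := ENNReal.coe_ne_top
    simpa only [mul_zero, add_zero] using
      le_add_mul_of_transportCost_le hK ENNReal.zero_ne_top h.le fun π hπ => calc
      μ F ≤ ∫⁻ x, thickenedIndicator hδ F x ∂μ := by
          rw [← lintegral_indicator_one hF.measurableSet]
          exact lintegral_mono <| Set.indicator_le fun x hx => by
            simp [thickenedIndicator_one hδ F hx]
      _ ≤ ∫⁻ x, thickenedIndicator hδ F x ∂ν + ∫⁻ z, δ.toNNReal⁻¹ * edist z.1 z.2 ∂π :=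
          lintegral_le_of_mem_couplings hπ hf hf fun z =>
            coe_le_add_mul_edist_of_lipschitzWith (lipschitzWith_thickenedIndicator hδ F) z.1 z.2
      _ = _ := by rw [lintegral_const_mul' _ _ hK]
  have hδ : ∀ n : ℕ, 0 < 1 / ((n : ℝ) + 1) := fun n => Nat.one_div_pos_of_nat
  exact ge_of_tendsto (tendsto_lintegral_thickenedIndicator_of_isClosed ν hF hδ
    tendsto_one_div_add_atTop_nhds_zero_nat) (Eventually.of_forall fun n => le_thickened (hδ n))

lemma eq_of_transportCost_edist_eq_zero [BorelSpace α] [IsFiniteMeasure μ] [IsFiniteMeasure ν]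
    (h : transportCost edist μ ν = 0) : μ = ν := by
  have h' : transportCost edist ν μ = 0 := (transportCost_comm edist_comm).symm.trans h
  have hclosed : ∀ F, IsClosed F → μ F = ν F := fun F hF =>
    le_antisymm (measure_le_of_transportCost_edist_eq_zero h hF)
      (measure_le_of_transportCost_edist_eq_zero h' hF)
  refine ext_of_generate_finite _ (BorelSpace.measurable_eq.trans borel_eq_generateFrom_isClosed)
    isPiSystem_isClosed hclosed (hclosed _ isClosed_univ)

end Metric

lemma epos_sub_self (a : EReal) : epos (a - a) = 0 :=
  EReal.toENNReal_of_nonpos EReal.sub_self_le_zero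

lemma ofReal_le_ofReal_add_ofReal_sub (x y : ℝ) :
    ENNReal.ofReal x ≤ ENNReal.ofReal y + ENNReal.ofReal (x - y) := by
  simpa using ENNReal.ofReal_add_le (p := y) (q := x - y)

lemma ofReal_add_ofReal_neg_le (x y : ℝ) :
    ENNReal.ofReal x + ENNReal.ofReal (-y) ≤
      ENNReal.ofReal (-x) + ENNReal.ofReal y + ENNReal.ofReal (x - y) := by
  simp only [ENNReal.ofReal, ← ENNReal.coe_add, ENNReal.coe_le_coe, ← NNReal.coe_le_coe,
    NNReal.coe_add, Real.coe_toNNReal']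
  linarith [max_zero_sub_max_neg_zero_eq_self x, max_zero_sub_max_neg_zero_eq_self y,
    le_max_left (x - y) 0]

lemma epos_le_epos_add_of_epos_sub_le {a b : EReal} {c : ℝ≥0∞} (h : epos (a - b) ≤ c) :
    epos a ≤ epos b + c := by
  induction a using EReal.rec <;> induction b using EReal.rec <;>
    simp_all [epos, ← EReal.coe_sub]
  case coe.coe x y => exact (ofReal_le_ofReal_add_ofReal_sub x y).trans (by gcongr)

lemma epos_add_epos_neg_le_of_epos_sub_le {a b : EReal} {c : ℝ≥0∞} (h : epos (a - b) ≤ c) :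
    epos a + epos (-b) ≤ epos (-a) + epos b + c := by
  induction a using EReal.rec <;> induction b using EReal.rec <;>
    simp_all [epos, ← EReal.coe_sub]
  case coe.coe x y => exact (ofReal_add_ofReal_neg_le x y).trans (by gcongr)

section Expectation

variable {α : Type*} [MeasurableSpace α] {μ ν : Measure α} {ℓ : α → EReal}

lemma eexp_of_ne_top (hA : ∫⁻ x, epos (ℓ x) ∂μ ≠ ⊤) (hB : ∫⁻ x, epos (-ℓ x) ∂μ ≠ ⊤) :
    eexp μ ℓ = (((∫⁻ x, epos (ℓ x) ∂μ).toReal - (∫⁻ x, epos (-ℓ x) ∂μ).toReal : ℝ) : EReal) := by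
  rw [eexp, if_neg hA, if_neg hB]

lemma eexp_le_eexp_add {K : ℝ≥0∞} (hA : ∫⁻ x, epos (ℓ x) ∂ν ≠ ⊤)
    (hB : ∫⁻ x, epos (-ℓ x) ∂ν ≠ ⊤) (hK : K ≠ ⊤)
    (h₁ : ∫⁻ x, epos (ℓ x) ∂μ ≤ ∫⁻ x, epos (ℓ x) ∂ν + K)
    (h₂ : ∫⁻ x, epos (ℓ x) ∂μ + ∫⁻ x, epos (-ℓ x) ∂ν ≤
      ∫⁻ x, epos (-ℓ x) ∂μ + ∫⁻ x, epos (ℓ x) ∂ν + K) :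
    eexp μ ℓ ≤ eexp ν ℓ + ennToE K := by
  have hAμ : ∫⁻ x, epos (ℓ x) ∂μ ≠ ⊤ := ne_top_of_le_ne_top (by finiteness) h₁
  by_cases hBμ : ∫⁻ x, epos (-ℓ x) ∂μ = ⊤
  · simp [eexp, hAμ, hBμ]
  rw [eexp_of_ne_top hAμ hBμ, eexp_of_ne_top hA hB, ennToE, if_neg hK, ← EReal.coe_add,
    EReal.coe_le_coe_iff]
  have := (ENNReal.toReal_le_toReal (by finiteness) (by finiteness)).2 h₂
  rw [ENNReal.toReal_add (by finiteness) hK, ENNReal.toReal_add hAμ hB,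
    ENNReal.toReal_add hBμ hA] at this
  linarith

end Expectation

lemma lintegral_le_rpow_lintegral_rpow {β : Type*} [MeasurableSpace β] (μ : Measure β)
    [IsProbabilityMeasure μ] {f : β → ℝ≥0∞} (hf : AEMeasurable f μ) {p : ℝ} (hp : 1 ≤ p) :
    ∫⁻ x, f x ∂μ ≤ (∫⁻ x, f x ^ p ∂μ) ^ (1 / p) := by
  simpa [eLpNorm', enorm_eq_self] using
    eLpNorm'_le_eLpNorm'_of_exponent_le one_pos hp μ hf.aestronglyMeasurable

section Wasserstein

variable {m : ℕ} {nrm : (Fin m → ℝ) → ℝ} {p : ℝ}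

lemma transportCost_le_Wp (hnrm : IsNorm nrm) (hp : 1 ≤ p) (Q P : Measure (Fin m → ℝ)) :
    transportCost (fun x y => ENNReal.ofReal (nrm (x - y))) Q P ≤ Wp nrm p Q P := by
  have hp0 : 0 < p := zero_lt_one.trans_le hp
  refine le_of_forall_gt fun r hr => ?_
  -- `Wp` is the `1 / p`-th power of the transport cost for `nrm (x - y) ^ p`
  rw [Wp, one_div, ENNReal.rpow_inv_lt_iff hp0] at hr
  obtain ⟨π, hπ, hlt⟩ := exists_lintegral_lt_of_transportCost_lt
    (c := fun x y => ENNReal.ofReal (nrm (x - y) ^ p)) hr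
  have := hπ.1
  calc transportCost _ Q P ≤ ∫⁻ z, ENNReal.ofReal (nrm (z.1 - z.2)) ∂π := iInf₂_le π hπ
    _ ≤ (∫⁻ z, ENNReal.ofReal (nrm (z.1 - z.2)) ^ p ∂π) ^ (1 / p) :=
      lintegral_le_rpow_lintegral_rpow π (hnrm.continuous.comp
        (continuous_fst.sub continuous_snd)).measurable.ennreal_ofReal.aemeasurable hp
    _ = (∫⁻ z, ENNReal.ofReal (nrm (z.1 - z.2) ^ p) ∂π) ^ (1 / p) := by
      simp_rw [ENNReal.ofReal_rpow_of_nonneg (hnrm.nonneg _) hp0.le]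
    _ < r := by rwa [one_div, ENNReal.rpow_inv_lt_iff hp0]

lemma eq_of_Wp_eq_zero (hnrm : IsNorm nrm) (hp : 1 ≤ p) {Q P : Measure (Fin m → ℝ)}
    [IsFiniteMeasure Q] [IsFiniteMeasure P] (h : Wp nrm p Q P = 0) : Q = P := by
  obtain ⟨C, hC⟩ := hnrm.exists_edist_le_mul
  refine eq_of_transportCost_edist_eq_zero (nonpos_iff_eq_zero.1 ?_)
  have hT := (transportCost_le_Wp hnrm hp Q P).trans h.le
  have := le_add_mul_of_transportCost_le (a := transportCost edist Q P) (b := 0)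
    ENNReal.coe_ne_top ENNReal.zero_ne_top hT fun π hπ => calc
      transportCost edist Q P ≤ ∫⁻ z, edist z.1 z.2 ∂π := iInf₂_le π hπ
      _ ≤ ∫⁻ z, C * ENNReal.ofReal (nrm (z.1 - z.2)) ∂π := lintegral_mono fun z => hC z.1 z.2
      _ = 0 + C * ∫⁻ z, ENNReal.ofReal (nrm (z.1 - z.2)) ∂π := by
        rw [lintegral_const_mul' _ _ ENNReal.coe_ne_top, zero_add]
  rwa [mul_zero, add_zero] at this

end Wasserstein

section Lipschitz

variable {m : ℕ} {nrm : (Fin m → ℝ) → ℝ} {ℓ : (Fin m → ℝ) → EReal}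

lemma epos_sub_le_lipModE_mul (hnrm : IsNorm nrm) (ℓ : (Fin m → ℝ) → EReal) (x y : Fin m → ℝ) :
    epos (ℓ x - ℓ y) ≤ lipModE nrm ℓ * ENNReal.ofReal (nrm (x - y)) := by
  rcases eq_or_ne x y with rfl | hxy
  · simp [epos_sub_self]
  rw [← ENNReal.div_le_iff (by simpa using hnrm.pos (sub_ne_zero.2 hxy)) ENNReal.ofReal_ne_top]
  exact le_iSup₂_of_le x y (le_iSup_of_le hxy le_rfl)

-- The cross terms let the bound pass to `ℓ⁺ - ℓ⁻` without subtracting infinite integrals.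
lemma lintegral_epos_le_of_mem_couplings (hnrm : IsNorm nrm) (hℓ : Measurable ℓ)
    (hL : lipModE nrm ℓ ≠ ⊤) {Q P : Measure (Fin m → ℝ)}
    {π : Measure ((Fin m → ℝ) × (Fin m → ℝ))} (hπ : π ∈ Couplings Q P) :
    ∫⁻ x, epos (ℓ x) ∂Q ≤
        ∫⁻ x, epos (ℓ x) ∂P + lipModE nrm ℓ * ∫⁻ z, ENNReal.ofReal (nrm (z.1 - z.2)) ∂π ∧
      ∫⁻ x, epos (ℓ x) ∂Q + ∫⁻ x, epos (-ℓ x) ∂P ≤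
        ∫⁻ x, epos (-ℓ x) ∂Q + ∫⁻ x, epos (ℓ x) ∂P +
          lipModE nrm ℓ * ∫⁻ z, ENNReal.ofReal (nrm (z.1 - z.2)) ∂π := by
  have hpos : Measurable fun x => epos (ℓ x) := measurable_ereal_toENNReal.comp hℓ
  have hneg : Measurable fun x => epos (-ℓ x) := measurable_ereal_toENNReal.comp hℓ.neg
  have hlip := fun z : (Fin m → ℝ) × (Fin m → ℝ) => epos_sub_le_lipModE_mul hnrm ℓ z.1 z.2
  rw [← lintegral_const_mul' _ _ hL]
  exact ⟨lintegral_le_of_mem_couplings hπ hpos hpos fun z =>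
      epos_le_epos_add_of_epos_sub_le (hlip z),
    lintegral_add_le_of_mem_couplings hπ hpos hneg hneg hpos fun z =>
      epos_add_epos_neg_le_of_epos_sub_le (hlip z)⟩

end Lipschitz

theorem lipschitz_regularization_general {m : ℕ} (nrm : (Fin m → ℝ) → ℝ) (hnrm : IsNorm nrm)
    (p ε : ℝ) (hp : 1 ≤ p) (Ξ : Set (Fin m → ℝ)) (P : Measure (Fin m → ℝ))
    [IsProbabilityMeasure P] (ℓ : (Fin m → ℝ) → EReal) (hint : IntegrableE P ℓ) :
    (⨆ Q : (WBall nrm p ε Ξ P), eexp Q.1 ℓ) ≤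
      eexp P ℓ + ennToE (ENNReal.ofReal ε * lipModE nrm ℓ) := by
  obtain ⟨hℓ, hA, hB⟩ := hint
  refine iSup_le ?_
  rintro ⟨Q, hQ, -, hW⟩
  change eexp Q ℓ ≤ _
  by_cases hL : lipModE nrm ℓ = ⊤
  · rcases eq_or_ne (ENNReal.ofReal ε) 0 with hε | hε
    · -- a ball of radius zero is `{P}`, and `0 * ⊤ = 0`
      obtain rfl := eq_of_Wp_eq_zero hnrm hp (nonpos_iff_eq_zero.1 (hε ▸ hW))
      simp [hε, ennToE]
    · rw [hL, ENNReal.mul_top hε, ennToE, if_pos rfl, eexp_of_ne_top hA hB, EReal.coe_add_top]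
      exact le_top
  have hT := (transportCost_le_Wp hnrm hp Q P).trans hW
  have hK := fun π (hπ : π ∈ Couplings Q P) => lintegral_epos_le_of_mem_couplings hnrm hℓ hL hπ
  rw [mul_comm]
  exact eexp_le_eexp_add hA hB (ENNReal.mul_ne_top hL ENNReal.ofReal_ne_top)
    (le_add_mul_of_transportCost_le hL ENNReal.ofReal_ne_top hT fun π hπ => (hK π hπ).1)
    (le_add_mul_of_transportCost_le hL ENNReal.ofReal_ne_top hT fun π hπ => (hK π hπ).2)

/-- **Lipschitz regularization.** For any `p ∈ [1, ∞)`, radius `ε ≥ 0`, nominal distribution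
`P` supported on a closed set `Ξ ⊆ ℝ^m` and upper semicontinuous `P`-integrable loss `ℓ`,
the worst-case risk over the type-`p` Wasserstein ball is bounded above by the
Lipschitz-regularized nominal risk. -/
theorem lipschitz_regularization {m : ℕ} (nrm : (Fin m → ℝ) → ℝ) (hnrm : IsNorm nrm)
    (p ε : ℝ) (hp : 1 ≤ p) (hε : 0 ≤ ε)
    (Ξ : Set (Fin m → ℝ)) (hΞ : IsClosed Ξ)
    (P : Measure (Fin m → ℝ)) [IsProbabilityMeasure P] (hPsupp : P Ξᶜ = 0)
    (ℓ : (Fin m → ℝ) → EReal) (hbot : ∀ x, ℓ x ≠ ⊥)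
    (husc : UpperSemicontinuous ℓ) (hint : IntegrableE P ℓ) :
    (⨆ Q : (WBall nrm p ε Ξ P), eexp Q.1 ℓ) ≤
      eexp P ℓ + ennToE (ENNReal.ofReal ε * lipModE nrm ℓ) :=
  lipschitz_regularization_general nrm hnrm p ε hp Ξ P ℓ hint

end WDro
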